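/- arXiv:2306.13822 — 3 statements merged into one kernel-verified Lean document; each statement's English description precedes it below -/
import Mathlib

section
/- If the system Σ is state monotone and K is a robust controlled invariant for Σ with a lower-closed constraint set X, then the lower closure ↓K is also a robust controlled invariant for Σ and (X, U, D). -/
/-- K is a robust controlled invariant for x⁺ = f(x,u,d) and constraint set (X, U, D). -/
def IsRCI {Xt Ut Dt : Type*} (f : Xt → Ut → Dt → Xt)
    (XS : Set Xt) (US : Set Ut) (DS : Set Dt) (K : Set Xt) : Prop :=
  K ⊆ XS ∧ ∀ x ∈ K, ∃ u ∈ US, ∀ d ∈ DS, f x u d ∈ K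

/-- for an SM system with lower-closed state constraint X,
    the lower closure of a robust controlled invariant is a robust controlled invariant. -/
theorem rci_lowerClosure {Xt Ut Dt : Type*} [PartialOrder Xt] (f : Xt → Ut → Dt → Xt)
    (XS : Set Xt) (US : Set Ut) (DS : Set Dt) (K : Set Xt)
    (hSM : ∀ x₁ x₂ : Xt, ∀ u : Ut, ∀ d : Dt, x₁ ≤ x₂ → f x₁ u d ≤ f x₂ u d)
    (hX : ∀ z x : Xt, z ≤ x → x ∈ XS → z ∈ XS)
    (hK : IsRCI f XS US DS K) :
    IsRCI f XS US DS {z | ∃ a ∈ K, z ≤ a} := by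
  obtain ⟨hKX, hKinv⟩ := hK
  constructor
  · rintro z ⟨a, haK, hza⟩
    exact hX z a hza (hKX haK)
  · rintro z ⟨a, haK, hza⟩
    obtain ⟨u, huU, hu⟩ := hKinv a haK
    exact ⟨u, huU, fun d hd => ⟨f a u d, hu d hd, hSM z a u d hza⟩⟩
end

section
/- If the system Σ is state monotone and X is lower closed, then the maximal robust controlled invariant K for Σ and (X, U, D) is lower closed. -/
/-- for an SM system with lower-closed X, the maximal robust controlled
    invariant is lower closed. -/
theorem maximal_rci_lowerClosed {Xt Ut Dt : Type*} [PartialOrder Xt]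
    (f : Xt → Ut → Dt → Xt) (XS : Set Xt) (US : Set Ut) (DS : Set Dt) (K : Set Xt)
    (hSM : ∀ x₁ x₂ : Xt, ∀ u : Ut, ∀ d : Dt, x₁ ≤ x₂ → f x₁ u d ≤ f x₂ u d)
    (hX : ∀ z x : Xt, z ≤ x → x ∈ XS → z ∈ XS)
    (hK : IsRCI f XS US DS K)
    (hmax : ∀ K' : Set Xt, IsRCI f XS US DS K' → K' ⊆ K) :
    ∀ z x : Xt, z ≤ x → x ∈ K → z ∈ K := by
  intro z x hzx hxK
  set K' : Set Xt := {z | ∃ x ∈ K, z ≤ x} with hK'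
  have hRCI : IsRCI f XS US DS K' := by
    constructor
    · rintro w ⟨y, hyK, hwy⟩
      exact hX w y hwy (hK.1 hyK)
    · rintro w ⟨y, hyK, hwy⟩
      obtain ⟨u, huU, hud⟩ := hK.2 y hyK
      exact ⟨u, huU, fun d hd => ⟨f y u d, hud d hd, hSM w y u d hwy⟩⟩
  exact hmax K' hRCI ⟨x, hxK, hzx⟩
end

section
/- Suppose Σ is state monotone, X is lower closed, and x₀ is closed-loop feasible with some controller κ and horizon N, i.e. Φ_κ(k, x₀, D) ⊆ X for 0 ≤ k ≤ N−1 and Φ_κ(N, x₀, D) ⊆ ↓⋃_{0≤k≤N−1} Φ_κ(k, x₀, D). Then K = ↓⋃_{0≤k≤N−1} Φ_κ(k, x₀, D) is a robust controlled invariant for Σ and (X, U, D). -/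
/-- Closed-loop trajectory of x⁺ = f(x, κ(x), d). -/
def clTraj {Xt Ut Dt : Type*} (f : Xt → Ut → Dt → Xt) (κ : Xt → Ut) (x₀ : Xt)
    (d : ℕ → Dt) : ℕ → Xt
  | 0 => x₀
  | k + 1 => f (clTraj f κ x₀ d k) (κ (clTraj f κ x₀ d k)) (d k)

/-- Closed-loop reachable set Φ_κ(k, x₀, D) over all disturbance sequences valued in D. -/
def clReach {Xt Ut Dt : Type*} (f : Xt → Ut → Dt → Xt) (κ : Xt → Ut) (x₀ : Xt)
    (DS : Set Dt) (k : ℕ) : Set Xt :=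
  {x | ∃ d : ℕ → Dt, (∀ i, d i ∈ DS) ∧ clTraj f κ x₀ d k = x}

lemma clTraj_congr {Xt Ut Dt : Type*} (f : Xt → Ut → Dt → Xt) (κ : Xt → Ut) (x₀ : Xt)
    (d₁ d₂ : ℕ → Dt) (k : ℕ) (h : ∀ i < k, d₁ i = d₂ i) :
    clTraj f κ x₀ d₁ k = clTraj f κ x₀ d₂ k := by
  induction k with
  | zero => rfl
  | succ k ih =>
    have hk := ih (fun i hi => h i (Nat.lt_succ_of_lt hi))
    simp [clTraj, hk, h k (Nat.lt_succ_self k)]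

/-- for an SM system with lower-closed X, if x₀ is closed-loop feasible with
    controller κ and horizon N, then ↓⋃_{0≤k≤N−1} Φ_κ(k, x₀, D) is a robust controlled
    invariant for Σ and (X, U, D). -/
theorem clFeasible_gives_rci {Xt Ut Dt : Type*} [PartialOrder Xt]
    (f : Xt → Ut → Dt → Xt) (XS : Set Xt) (US : Set Ut) (DS : Set Dt)
    (hSM : ∀ x₁ x₂ : Xt, ∀ u : Ut, ∀ d : Dt, x₁ ≤ x₂ → f x₁ u d ≤ f x₂ u d)
    (hX : ∀ z x : Xt, z ≤ x → x ∈ XS → z ∈ XS)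
    (x₀ : Xt) (κ : Xt → Ut) (hκ : ∀ x : Xt, κ x ∈ US) (N : ℕ) (hN : 0 < N)
    (hsafe : ∀ k < N, clReach f κ x₀ DS k ⊆ XS)
    (hfeas : clReach f κ x₀ DS N ⊆
      {z | ∃ k < N, ∃ y ∈ clReach f κ x₀ DS k, z ≤ y}) :
    IsRCI f XS US DS {z | ∃ k < N, ∃ y ∈ clReach f κ x₀ DS k, z ≤ y} := by
  constructor
  · rintro z ⟨k, hk, y, hy, hzy⟩
    exact hX z y hzy (hsafe k hk hy)
  · rintro z ⟨k, hk, y, hy, hzy⟩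
    refine ⟨κ y, hκ y, fun d hd => ?_⟩
    obtain ⟨ds, hds, hyd⟩ := hy
    -- f y (κ y) d ∈ clReach (k+1)
    have hstep : f y (κ y) d ∈ clReach f κ x₀ DS (k + 1) := by
      refine ⟨fun i => if i = k then d else ds i, fun i => ?_, ?_⟩
      · by_cases h : i = k <;> simp [h, hd, hds i]
      · have hc : clTraj f κ x₀ (fun i => if i = k then d else ds i) k =
            clTraj f κ x₀ ds k := clTraj_congr _ _ _ _ _ _ (fun i hi => by
          simp [Nat.ne_of_lt hi])
        simp [clTraj, hc, hyd]
    have hle : f z (κ y) d ≤ f y (κ y) d := hSM z y (κ y) d hzy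
    rcases Nat.lt_or_ge (k + 1) N with h | h
    · exact ⟨k + 1, h, f y (κ y) d, hstep, hle⟩
    · have hkN : k + 1 = N := le_antisymm (Nat.succ_le_of_lt hk) h
      rw [hkN] at hstep
      obtain ⟨k', hk', y', hy', hle'⟩ := hfeas hstep
      exact ⟨k', hk', y', hy', hle.trans hle'⟩
end
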